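/- arXiv:2501.17618 — 4 statements merged into one kernel-verified Lean document; each statement's English description precedes it below -/
import Mathlib

section
/- (Grouped force expression for distinguishable particles with PBC.) Let V_D be defined by exp(−βV_D(r)) = ∑_{w} exp(−βE^{id,w}(r)) over winding assignments w : Fin N → Fin P → Λ. Then for every particle ℓ, bead j, and coordinate i, −∂V_D/∂(r_ℓ^j)_i = ∑_{w∈Λ} p_{ℓ,j−1}(w)·(−2c)·(r_ℓ^j − r_ℓ^{j−1} − w·L)_i + ∑_{w∈Λ} p_{ℓ,j}(w)·(−2c)·(r_ℓ^j + w·L − r_ℓ^{j+1})_i, where for each spring (ℓ,j) the per-spring winding probability is p_{ℓ,j}(w) = μ(r_ℓ^j, r_ℓ^{j+1}, w) / ∑_{w'∈Λ} μ(r_ℓ^j, r_ℓ^{j+1}, w'), and bead indices are cyclic within each particle. -/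
/-!
The Boltzmann weight `exp(-β E^{id,w})` is the product of the spring weights
`μ(r_ℓ^j, r_ℓ^{j+1}, w_ℓ^j)`, so the sum over winding assignments factors into independent
per-spring sums and `V_D = -β⁻¹ ∑_{ℓ,j} log Z_{ℓ,j}` with
`Z_{ℓ,j} = ∑_{w ∈ Λ} μ(r_ℓ^j, r_ℓ^{j+1}, w)`.
The bead `r_ℓ^j` enters only the springs `(ℓ, j-1)` and `(ℓ, j)`, and the logarithmic derivative of
`Z_{ℓ,j}` is `β` times the `p_{ℓ,j}`-average of the spring force `-2c (r_ℓ^j + w L - r_ℓ^{j+1})`.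
-/

open Finset Real

noncomputable section

/-- Winding window: integer vectors `w : Fin d → ℤ` with `-W ≤ w i ≤ W` in every coordinate. -/
def windowSet (d W : ℕ) : Finset (Fin d → ℤ) :=
  Fintype.piFinset fun _ => Finset.Icc (-(W : ℤ)) (W : ℤ)

/-- The set of all winding assignments `w : Fin N → Fin P → Λ`. -/
def WAll (N P d W : ℕ) : Finset (Fin N → Fin P → Fin d → ℤ) :=
  Fintype.piFinset fun _ => Fintype.piFinset fun _ => windowSet d W

/-- Gaussian spring weight `μ(x, y, w) = exp(-βc ∑ᵢ (xᵢ + wᵢ L - yᵢ)²)`. -/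
def mu (d : ℕ) (β c L : ℝ) (x y : Fin d → ℝ) (w : Fin d → ℤ) : ℝ :=
  Real.exp (-(β * c * ∑ i, (x i + (w i : ℝ) * L - y i) ^ 2))

/-- Distinguishable configuration energy `E^{id,w}`, with cyclic bead index
`r_ℓ^{P+1} = r_ℓ^1` realized through addition on `Fin P`. -/
def Eid (N P d : ℕ) [NeZero P] (c L : ℝ) (r : Fin N → Fin P → Fin d → ℝ)
    (w : Fin N → Fin P → Fin d → ℤ) : ℝ :=
  c * ∑ ℓ : Fin N, ∑ j : Fin P, ∑ i : Fin d,
    (r ℓ j i + (w ℓ j i : ℝ) * L - r ℓ (j + 1) i) ^ 2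

/-- The distinguishable ring-polymer potential with PBC:
`exp(-β V_D(r)) = ∑_w exp(-β E^{id,w}(r))`. -/
def VD (N P d W : ℕ) [NeZero P] (β c L : ℝ) (r : Fin N → Fin P → Fin d → ℝ) : ℝ :=
  -(1 / β) * Real.log (∑ w ∈ WAll N P d W, Real.exp (-(β * Eid N P d c L r w)))

/-- Replace the `i`-th coordinate of bead `j` of particle `ℓ` by `t`. -/
def updR {N P d : ℕ} (r : Fin N → Fin P → Fin d → ℝ) (ℓ : Fin N) (j : Fin P) (i : Fin d)
    (t : ℝ) : Fin N → Fin P → Fin d → ℝ :=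
  Function.update r ℓ (Function.update (r ℓ) j (Function.update (r ℓ j) i t))

lemma updR_self {N P d : ℕ} (r : Fin N → Fin P → Fin d → ℝ) (ℓ : Fin N) (j : Fin P) (i : Fin d) :
    updR r ℓ j i (r ℓ j i) = r := by
  simp [updR]

lemma hasDerivAt_updR {N P d : ℕ} (r : Fin N → Fin P → Fin d → ℝ) (ℓ : Fin N) (j : Fin P)
    (i : Fin d) (ℓ' : Fin N) (j' : Fin P) (t : ℝ) :
    HasDerivAt (fun t => updR r ℓ j i t ℓ' j')
      ((if ℓ' = ℓ ∧ j' = j then 1 else 0 : ℝ) • Pi.single i 1) t := by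
  rw [hasDerivAt_pi]
  intro i'
  by_cases h : ℓ' = ℓ ∧ j' = j
  · obtain ⟨rfl, rfl⟩ := h
    by_cases hi : i' = i
    · subst hi
      simpa [updR] using hasDerivAt_id' t
    · simpa [updR, hi] using hasDerivAt_const t (r ℓ' j' i')
  · have : ∀ t, updR r ℓ j i t ℓ' j' = r ℓ' j' := by
      intro t
      by_cases hℓ : ℓ' = ℓ
      · subst hℓ
        simp_all [updR]
      · simp [updR, hℓ]
    simpa [this, h] using hasDerivAt_const t (r ℓ' j' i')

lemma exp_neg_mul_Eid (N P d : ℕ) [NeZero P] (β c L : ℝ) (r : Fin N → Fin P → Fin d → ℝ)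
    (w : Fin N → Fin P → Fin d → ℤ) :
    exp (-(β * Eid N P d c L r w)) =
      ∏ ℓ, ∏ j, mu d β c L (r ℓ j) (r ℓ (j + 1)) (w ℓ j) := by
  simp only [mu, Eid, ← exp_sum, mul_sum, ← sum_neg_distrib, mul_assoc]

lemma sum_WAll_prod (N P d W : ℕ) (f : Fin N → Fin P → (Fin d → ℤ) → ℝ) :
    ∑ w ∈ WAll N P d W, ∏ ℓ, ∏ j, f ℓ j (w ℓ j) = ∏ ℓ, ∏ j, ∑ u ∈ windowSet d W, f ℓ j u := by
  simp_rw [WAll, prod_univ_sum]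

lemma windowSet_nonempty (d W : ℕ) : (windowSet d W).Nonempty :=
  ⟨0, by simp [windowSet, Fintype.mem_piFinset]⟩

lemma VD_eq_sum_log (N P d W : ℕ) [NeZero P] (β c L : ℝ) (r : Fin N → Fin P → Fin d → ℝ) :
    VD N P d W β c L r =
      -(1 / β) * ∑ ℓ, ∑ j, log (∑ w ∈ windowSet d W, mu d β c L (r ℓ j) (r ℓ (j + 1)) w) := by
  have hpos : ∀ x y, 0 < ∑ w ∈ windowSet d W, mu d β c L x y w := fun x y =>
    sum_pos (fun w _ => exp_pos _) (windowSet_nonempty d W)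
  rw [VD]
  simp_rw [exp_neg_mul_Eid, sum_WAll_prod]
  rw [log_prod fun ℓ _ => (prod_pos fun j _ => hpos _ _).ne']
  simp_rw [log_prod fun j _ => (hpos _ _).ne']

lemma hasDerivAt_mu {d : ℕ} (β c L : ℝ) {x y : ℝ → Fin d → ℝ} {x' y' : Fin d → ℝ} {t : ℝ}
    (hx : HasDerivAt x x' t) (hy : HasDerivAt y y' t) (w : Fin d → ℤ) :
    HasDerivAt (fun t => mu d β c L (x t) (y t) w)
      (mu d β c L (x t) (y t) w *
        -(β * c * ∑ i, 2 * (x t i + w i * L - y t i) * (x' i - y' i))) t := by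
  have hsq : HasDerivAt (fun t => ∑ i, (x t i + w i * L - y t i) ^ 2)
      (∑ i, 2 * (x t i + w i * L - y t i) * (x' i - y' i)) t := by
    refine HasDerivAt.fun_sum fun i _ => ?_
    have := (((hasDerivAt_pi.mp hx i).add_const (w i * L)).sub (hasDerivAt_pi.mp hy i)).pow 2
    exact this.congr_deriv (by simp only [Pi.sub_apply]; ring)
  exact (hsq.const_mul (β * c)).neg.exp

def meanSpringForce {d : ℕ} (s : Finset (Fin d → ℤ)) (β c L : ℝ) (x y : Fin d → ℝ) (i : Fin d) :
    ℝ :=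
  ∑ w ∈ s, (mu d β c L x y w / ∑ w' ∈ s, mu d β c L x y w') * ((-2 * c) * (x i + w i * L - y i))

lemma hasDerivAt_log_sum_mu {d : ℕ} (β c L : ℝ) {s : Finset (Fin d → ℤ)} (hs : s.Nonempty)
    {x y : ℝ → Fin d → ℝ} {a b t : ℝ} (i : Fin d)
    (hx : HasDerivAt x (a • Pi.single i 1) t) (hy : HasDerivAt y (b • Pi.single i 1) t) :
    HasDerivAt (fun t => log (∑ w ∈ s, mu d β c L (x t) (y t) w))
      (β * ((a - b) * meanSpringForce s β c L (x t) (y t) i)) t := by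
  have hZ : ∑ w ∈ s, mu d β c L (x t) (y t) w ≠ 0 :=
    (sum_pos (fun w _ => exp_pos _) hs).ne'
  convert (HasDerivAt.fun_sum fun w _ => hasDerivAt_mu β c L hx hy w).log hZ using 1
  have hdir : ∀ w : Fin d → ℤ,
      ∑ i', 2 * (x t i' + w i' * L - y t i') * ((a • Pi.single i 1 : Fin d → ℝ) i' -
        (b • Pi.single i 1 : Fin d → ℝ) i') = 2 * (x t i + w i * L - y t i) * (a - b) := by
    intro w
    rw [Fintype.sum_eq_single i fun i' hi' => by simp [hi']]
    simp
  simp only [hdir, meanSpringForce, mul_sum, sum_div]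
  refine sum_congr rfl fun w _ => ?_
  field_simp

lemma sum_sum_ite_sub_ite_mul {N P : ℕ} [NeZero P] (ℓ : Fin N) (j : Fin P) (F : Fin N → Fin P → ℝ) :
    ∑ ℓ', ∑ j', ((if ℓ' = ℓ ∧ j' = j then 1 else 0) - (if ℓ' = ℓ ∧ j' + 1 = j then 1 else 0)) *
      F ℓ' j' = F ℓ j - F ℓ (j - 1) := by
  simp [sub_mul, ite_and, sum_sub_distrib, ← eq_sub_iff_add_eq]

theorem stmt5_general (N P d W : ℕ) [NeZero P]
    (β L c : ℝ) (hβ : 0 < β)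
    (r : Fin N → Fin P → Fin d → ℝ) (ℓ : Fin N) (j : Fin P) (i : Fin d) :
    HasDerivAt (fun t => VD N P d W β c L (updR r ℓ j i t))
      (-(∑ w ∈ windowSet d W,
            (mu d β c L (r ℓ (j - 1)) (r ℓ j) w /
                ∑ w' ∈ windowSet d W, mu d β c L (r ℓ (j - 1)) (r ℓ j) w') *
              ((-2 * c) * (r ℓ j i - r ℓ (j - 1) i - (w i : ℝ) * L)) +
          ∑ w ∈ windowSet d W,
            (mu d β c L (r ℓ j) (r ℓ (j + 1)) w /
                ∑ w' ∈ windowSet d W, mu d β c L (r ℓ j) (r ℓ (j + 1)) w') *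
              ((-2 * c) * (r ℓ j i + (w i : ℝ) * L - r ℓ (j + 1) i))))
      (r ℓ j i) := by
  have hspring : ∀ ℓ' j', HasDerivAt
      (fun t => log (∑ w ∈ windowSet d W,
        mu d β c L (updR r ℓ j i t ℓ' j') (updR r ℓ j i t ℓ' (j' + 1)) w))
      (β * (((if ℓ' = ℓ ∧ j' = j then 1 else 0) - (if ℓ' = ℓ ∧ j' + 1 = j then 1 else 0)) *
        meanSpringForce (windowSet d W) β c L (r ℓ' j') (r ℓ' (j' + 1)) i)) (r ℓ j i) :=
    fun ℓ' j' => by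
      have := hasDerivAt_log_sum_mu β c L (windowSet_nonempty d W) i
        (hasDerivAt_updR r ℓ j i ℓ' j' (r ℓ j i)) (hasDerivAt_updR r ℓ j i ℓ' (j' + 1) (r ℓ j i))
      rwa [updR_self] at this
  have hprev : ∑ w ∈ windowSet d W,
      (mu d β c L (r ℓ (j - 1)) (r ℓ j) w /
          ∑ w' ∈ windowSet d W, mu d β c L (r ℓ (j - 1)) (r ℓ j) w') *
        ((-2 * c) * (r ℓ j i - r ℓ (j - 1) i - (w i : ℝ) * L)) =
      -meanSpringForce (windowSet d W) β c L (r ℓ (j - 1)) (r ℓ j) i := by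
    simp only [meanSpringForce, ← sum_neg_distrib]
    exact sum_congr rfl fun w _ => by ring
  simp only [VD_eq_sum_log]
  refine ((HasDerivAt.fun_sum fun ℓ' _ => HasDerivAt.fun_sum fun j' _ =>
    hspring ℓ' j').const_mul (-(1 / β))).congr_deriv ?_
  simp_rw [← mul_sum]
  rw [sum_sum_ite_sub_ite_mul, sub_add_cancel, hprev]
  change _ = -(_ + meanSpringForce (windowSet d W) β c L (r ℓ j) (r ℓ (j + 1)) i)
  field_simp
  ring

/-- grouped force expression for distinguishable particles with PBC.
Minus the partial derivative of `V_D` w.r.t. `(r_ℓ^j)_i` equals the sum of the two spring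
contributions, each averaged over the per-spring winding probability
`p_{ℓ,j}(w) = μ(r_ℓ^j, r_ℓ^{j+1}, w) / ∑_{w'} μ(r_ℓ^j, r_ℓ^{j+1}, w')`. -/
theorem stmt5 (N P d W : ℕ) [NeZero N] [NeZero P] (hd : 0 < d)
    (β L c : ℝ) (hβ : 0 < β) (hL : 0 < L) (hc : 0 < c)
    (r : Fin N → Fin P → Fin d → ℝ) (ℓ : Fin N) (j : Fin P) (i : Fin d) :
    HasDerivAt (fun t => VD N P d W β c L (updR r ℓ j i t))
      (-(∑ w ∈ windowSet d W,
            (mu d β c L (r ℓ (j - 1)) (r ℓ j) w /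
                ∑ w' ∈ windowSet d W, mu d β c L (r ℓ (j - 1)) (r ℓ j) w') *
              ((-2 * c) * (r ℓ j i - r ℓ (j - 1) i - (w i : ℝ) * L)) +
          ∑ w ∈ windowSet d W,
            (mu d β c L (r ℓ j) (r ℓ (j + 1)) w /
                ∑ w' ∈ windowSet d W, mu d β c L (r ℓ j) (r ℓ (j + 1)) w') *
              ((-2 * c) * (r ℓ j i + (w i : ℝ) * L - r ℓ (j + 1) i))))
      (r ℓ j i) :=
  stmt5_general N P d W β L c hβ r ℓ j i

end
end

section
/- (Summing the bosonic recursion over windings.) For 1 ≤ a ≤ b ≤ N and a winding assignment w giving a vector in Λ to every bead of particles a,…,b, let E_w^{[a,b]} = c·∑_{ℓ=a}^{b} ∑_{j=1}^{P} ∑_{i=1}^d (r_ℓ^j + w_ℓ^j·L − r_ℓ^{j+1})_i², where r_ℓ^{P+1} = r_{ℓ+1}^1 except r_b^{P+1} = r_a^1 (the specific-winding cycle energy), and let exp(−βE^{[a,b]}) = ∑_{w} exp(−βE_w^{[a,b]}) (the winding-summed cycle energy). Define recursively F_0 = 1 and, for 1 ≤ v ≤ N and w a winding assignment on the beads of particles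 1,…,v, F_v(w) = (1/v)·∑_{k=1}^{v} F_{v−k}(w restricted to particles 1,…,v−k)·exp(−βE_w^{[v−k+1,v]}); and define G_0 = 1, G_v = (1/v)·∑_{k=1}^{v} G_{v−k}·exp(−βE^{[v−k+1,v]}). Then for every 0 ≤ v ≤ N, ∑_{w} F_v(w) = G_v, where the sum runs over all winding assignments on the beads of particles 1,…,v. -/
/-! A winding assignment on particles `1, …, v` is the sum of independent assignments on
`1, …, v - k` and on `v - k + 1, …, v`. In the `k`-th term of the recursion for `F` the first
summand enters only through `F (v - k)` and the second only through the cycle energy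
`E^{[v-k+1, v]}`, so summing over windings factorizes that term into
`(∑ F (v - k)) · exp(-βE^{[v-k+1, v]})`, and strong induction on `v` gives `G v`. -/

open Finset Real

noncomputable section

/-- Winding assignments giving a vector of `Λ` to every bead of particles `a, …, b`
(particles are labeled `1, …, N` inside `Fin (N+1)`); all other beads carry the zero
winding, so that this `Finset` is in canonical bijection with the assignments on the
beads of particles `a, …, b`. -/
def Wset (N P d W : ℕ) (a b : ℕ) : Finset (Fin (N + 1) → Fin P → Fin d → ℤ) :=
  Fintype.piFinset fun ℓ =>
    if a ≤ ℓ.val ∧ ℓ.val ≤ b then Fintype.piFinset fun _ => windowSet d W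
    else {fun _ _ => 0}

/-- Restriction of a winding assignment to the beads of particles `1, …, v`. -/
def restrictW (N P d : ℕ) (v : ℕ) (w : Fin (N + 1) → Fin P → Fin d → ℤ) :
    Fin (N + 1) → Fin P → Fin d → ℤ :=
  fun ℓ => if 1 ≤ ℓ.val ∧ ℓ.val ≤ v then w ℓ else fun _ _ => 0

open Fin.NatCast in
/-- Position of the bead following bead `j` of particle `ℓ` in the single ring polymer
through particles `a, …, b`: the next bead of the same particle, or the first bead of
particle `ℓ+1`, with the cycle closed from the last bead of `b` to the first bead of `a`. -/
def nxtPos (N P d : ℕ) [NeZero P] (r : Fin (N + 1) → Fin P → Fin d → ℝ)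
    (a b ℓ : ℕ) (j : Fin P) : Fin d → ℝ :=
  if h : j.val + 1 < P then r ℓ ⟨j.val + 1, h⟩
  else if ℓ = b then r a 0 else r (ℓ + 1 : ℕ) 0

open Fin.NatCast in
/-- Specific-winding cycle energy `E_w^{[a,b]}` of the ring polymer through particles
`a, …, b`. -/
def Ew (N P d : ℕ) [NeZero P] (c L : ℝ) (r : Fin (N + 1) → Fin P → Fin d → ℝ)
    (a b : ℕ) (w : Fin (N + 1) → Fin P → Fin d → ℤ) : ℝ :=
  c * ∑ ℓ ∈ Finset.Icc a b, ∑ j : Fin P, ∑ i : Fin d,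
    (r ℓ j i + (w ℓ j i : ℝ) * L - nxtPos N P d r a b ℓ j i) ^ 2

/-- Winding-summed cycle energy: `exp(-βE^{[a,b]}) = ∑_w exp(-βE_w^{[a,b]})`. -/
def EwSum (N P d W : ℕ) [NeZero P] (β c L : ℝ) (r : Fin (N + 1) → Fin P → Fin d → ℝ)
    (a b : ℕ) : ℝ :=
  ∑ w ∈ Wset N P d W a b, Real.exp (-(β * Ew N P d c L r a b w))


theorem Finset.sum_piFinset_ite_or {ι M R : Type*} [Fintype ι] [DecidableEq ι] [AddMonoid M]
    [DecidableEq M] [AddCommMonoid R] (p q : ι → Prop) [DecidablePred p] [DecidablePred q]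
    (hpq : ∀ i, ¬(p i ∧ q i)) (T : ι → Finset M) (f : (ι → M) → R) :
    ∑ x ∈ Fintype.piFinset (fun i => if p i ∨ q i then T i else {0}), f x =
      ∑ x ∈ Fintype.piFinset (fun i => if p i then T i else {0}),
        ∑ y ∈ Fintype.piFinset (fun i => if q i then T i else {0}), f (x + y) := by
  rw [← Finset.sum_product']
  symm
  refine Finset.sum_nbij' (fun xy => xy.1 + xy.2)
    (fun x => (fun i => if p i then x i else 0, fun i => if q i then x i else 0))
    ?_ ?_ ?_ ?_ fun _ _ => rfl
  · rintro ⟨x, y⟩ hxy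
    simp only [Finset.mem_product, Fintype.mem_piFinset] at hxy ⊢
    intro i
    have := hpq i
    have hx := hxy.1 i
    have hy := hxy.2 i
    split_ifs at hx hy ⊢ <;> simp_all
  · intro x hx
    simp only [Finset.mem_product, Fintype.mem_piFinset] at hx ⊢
    constructor <;> intro i <;> have := hx i <;> split_ifs at this ⊢ <;> simp_all
  · rintro ⟨x, y⟩ hxy
    simp only [Finset.mem_product, Fintype.mem_piFinset] at hxy
    ext i <;> have := hpq i <;> have hx := hxy.1 i <;> have hy := hxy.2 i <;>
      simp only [Pi.add_apply] <;> split_ifs at hx hy ⊢ <;> simp_all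
  · intro x hx
    funext i
    have := hpq i
    have hx := Fintype.mem_piFinset.1 hx i
    simp only [Pi.add_apply]
    split_ifs at hx ⊢ <;> simp_all

section Windings

variable {N P d W : ℕ}

theorem Wset_apply_eq_zero {a b : ℕ} {w : Fin (N + 1) → Fin P → Fin d → ℤ}
    (hw : w ∈ Wset N P d W a b) {ℓ : Fin (N + 1)} (hℓ : ¬(a ≤ ℓ.val ∧ ℓ.val ≤ b)) : w ℓ = 0 := by
  have hwℓ := Fintype.mem_piFinset.1 hw ℓ
  rwa [if_neg hℓ, Finset.mem_singleton] at hwℓ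

theorem Wset_of_lt {a b : ℕ} (hba : b < a) : Wset N P d W a b = {0} := by
  rw [← Fintype.piFinset_singleton (0 : Fin (N + 1) → Fin P → Fin d → ℤ), Wset]
  congr 1
  funext ℓ
  rw [if_neg (by omega)]
  rfl

theorem sum_Wset_eq_sum_sum_add {R : Type*} [AddCommMonoid R] {a m b : ℕ}
    (ham : a ≤ m + 1) (hmb : m ≤ b) (f : (Fin (N + 1) → Fin P → Fin d → ℤ) → R) :
    ∑ w ∈ Wset N P d W a b, f w =
      ∑ w₁ ∈ Wset N P d W a m, ∑ w₂ ∈ Wset N P d W (m + 1) b, f (w₁ + w₂) := by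
  have hsplit : Wset N P d W a b = Fintype.piFinset fun ℓ : Fin (N + 1) =>
      if (a ≤ ℓ.val ∧ ℓ.val ≤ m) ∨ (m + 1 ≤ ℓ.val ∧ ℓ.val ≤ b) then
        Fintype.piFinset fun _ => windowSet d W
      else {0} := by
    rw [Wset]
    congr with ℓ : 1
    congr 1
    exact propext (by omega)
  rw [hsplit]
  exact Finset.sum_piFinset_ite_or _ _ (fun _ => by omega) _ f

theorem restrictW_add_of_mem_Wset {m b : ℕ} {w₁ w₂ : Fin (N + 1) → Fin P → Fin d → ℤ}
    (hw₁ : w₁ ∈ Wset N P d W 1 m) (hw₂ : w₂ ∈ Wset N P d W (m + 1) b) :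
    restrictW N P d m (w₁ + w₂) = w₁ := by
  funext ℓ
  unfold restrictW
  split_ifs with hℓ
  · rw [Pi.add_apply, Wset_apply_eq_zero hw₂ (by omega), add_zero]
  · exact (Wset_apply_eq_zero hw₁ hℓ).symm

variable [NeZero P] {c L : ℝ} {r : Fin (N + 1) → Fin P → Fin d → ℝ}

open Fin.NatCast in
theorem Ew_congr {a b : ℕ} (hb : b ≤ N) {w w' : Fin (N + 1) → Fin P → Fin d → ℤ}
    (h : ∀ ℓ : Fin (N + 1), a ≤ ℓ.val → ℓ.val ≤ b → w ℓ = w' ℓ) :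
    Ew N P d c L r a b w = Ew N P d c L r a b w' := by
  unfold Ew
  congr 1
  refine Finset.sum_congr rfl fun ℓ hℓ => ?_
  rw [Finset.mem_Icc] at hℓ
  have hval : (ℓ : Fin (N + 1)).val = ℓ := Fin.val_cast_of_lt (by omega)
  rw [h _ (by omega) (by omega)]

theorem Ew_add_of_mem_Wset {m b : ℕ} (hb : b ≤ N) {w₁ w₂ : Fin (N + 1) → Fin P → Fin d → ℤ}
    (hw₁ : w₁ ∈ Wset N P d W 1 m) :
    Ew N P d c L r (m + 1) b (w₁ + w₂) = Ew N P d c L r (m + 1) b w₂ :=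
  Ew_congr hb fun _ hℓ _ => by rw [Pi.add_apply, Wset_apply_eq_zero hw₁ (by omega), zero_add]

theorem sum_Wset_restrictW_mul_exp_Ew {β : ℝ} {m v : ℕ} (hmv : m ≤ v) (hv : v ≤ N)
    (g : (Fin (N + 1) → Fin P → Fin d → ℤ) → ℝ) :
    ∑ w ∈ Wset N P d W 1 v,
        g (restrictW N P d m w) * Real.exp (-(β * Ew N P d c L r (m + 1) v w)) =
      (∑ w ∈ Wset N P d W 1 m, g w) * EwSum N P d W β c L r (m + 1) v := by
  rw [sum_Wset_eq_sum_sum_add (by omega) hmv, EwSum, Finset.sum_mul_sum]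
  refine Finset.sum_congr rfl fun w₁ hw₁ => Finset.sum_congr rfl fun w₂ hw₂ => ?_
  rw [restrictW_add_of_mem_Wset hw₁ hw₂, Ew_add_of_mem_Wset hv hw₁]

end Windings

theorem stmt8_general (N P d W : ℕ) [NeZero P]
    (β L c : ℝ)
    (r : Fin (N + 1) → Fin P → Fin d → ℝ)
    (F : ℕ → (Fin (N + 1) → Fin P → Fin d → ℤ) → ℝ) (G : ℕ → ℝ)
    (hF0 : ∀ w, F 0 w = 1)
    (hF : ∀ v, 1 ≤ v → v ≤ N → ∀ w,
      F v w = (1 / (v : ℝ)) * ∑ k ∈ Finset.Icc 1 v,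
        F (v - k) (restrictW N P d (v - k) w) *
          Real.exp (-(β * Ew N P d c L r (v - k + 1) v w)))
    (hG0 : G 0 = 1)
    (hG : ∀ v, 1 ≤ v → v ≤ N → G v = (1 / (v : ℝ)) * ∑ k ∈ Finset.Icc 1 v,
      G (v - k) * EwSum N P d W β c L r (v - k + 1) v) :
    ∀ v ≤ N, ∑ w ∈ Wset N P d W 1 v, F v w = G v := by
  intro v
  induction v using Nat.strong_induction_on with
  | _ v ih =>
  intro hv
  rcases Nat.eq_zero_or_pos v with rfl | hv₀
  · rw [Wset_of_lt zero_lt_one, Finset.sum_singleton, hF0, hG0]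
  rw [hG v hv₀ hv, Finset.sum_congr rfl fun w _ => hF v hv₀ hv w, ← Finset.mul_sum,
    Finset.sum_comm]
  congr 1
  refine Finset.sum_congr rfl fun k hk => ?_
  rw [sum_Wset_restrictW_mul_exp_Ew (v.sub_le k) hv, ih (v - k) (by grind) (by omega)]

/-- summing the bosonic recursion over windings. If `F` satisfies the
specific-winding recursion and `G` the winding-summed recursion, then for every `v ≤ N`
the sum of `F v` over all winding assignments on the beads of particles `1, …, v`
equals `G v`. -/
theorem stmt8 (N P d W : ℕ) [NeZero P] (hN : 1 ≤ N) (hd : 0 < d)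
    (β L c : ℝ) (hβ : 0 < β) (hL : 0 < L) (hc : 0 < c)
    (r : Fin (N + 1) → Fin P → Fin d → ℝ)
    (F : ℕ → (Fin (N + 1) → Fin P → Fin d → ℤ) → ℝ) (G : ℕ → ℝ)
    (hF0 : ∀ w, F 0 w = 1)
    (hF : ∀ v, 1 ≤ v → v ≤ N → ∀ w,
      F v w = (1 / (v : ℝ)) * ∑ k ∈ Finset.Icc 1 v,
        F (v - k) (restrictW N P d (v - k) w) *
          Real.exp (-(β * Ew N P d c L r (v - k + 1) v w)))
    (hG0 : G 0 = 1)
    (hG : ∀ v, 1 ≤ v → v ≤ N → G v = (1 / (v : ℝ)) * ∑ k ∈ Finset.Icc 1 v,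
      G (v - k) * EwSum N P d W β c L r (v - k + 1) v) :
    ∀ v ≤ N, ∑ w ∈ Wset N P d W 1 v, F v w = G v :=
  stmt8_general N P d W β L c r F G hF0 hF hG0 hG

end
end

section
/- (Interior-bead winding marginal in bosonic PIMD with PBC.) Let Pr(σ, w) = exp(−βE^{σ,w}) / ( ∑_{σ'} ∑_{w'} exp(−βE^{σ',w'}) ) be the Boltzmann distribution over pairs of a permutation σ of Fin N and a winding assignment w : Fin N → Fin P → Λ. Then for every particle ℓ, every interior spring index 1 ≤ j ≤ P−1, and every w₀ ∈ Λ, the marginal probability ∑_{σ} ∑_{w : w_ℓ^j = w₀} Pr(σ, w) equals μ(r_ℓ^j, r_ℓ^{j+1}, w₀) / ∑_{w'∈Λ} μ(r_ℓ^j, r_ℓ^{j+1}, w'); in particular it is independent of the permutation structure. -/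
/-!
The permutation enters the energy only through the last spring of each ring polymer, so the
energy of an interior spring `(ℓ, j)` involves only `r ℓ j`, `r ℓ (j + 1)` and its own winding
`w ℓ j`. Each Boltzmann weight therefore factors as `μ(w ℓ j)` times a remainder that does not
depend on `w ℓ j`; summed over a fibre `{w ℓ j = v}` the remainder gives the same value for every
`v ∈ Λ`. Numerator and partition function thus share one positive factor, which cancels.
-/

open Finset Real

noncomputable section

/-- Configuration spring energy `E^{σ,w}`: the bead after the last bead of particle `ℓ`
is the first bead of particle `σ(ℓ)`. -/
def Eperm (N P d : ℕ) [NeZero P] (c L : ℝ) (r : Fin N → Fin P → Fin d → ℝ)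
    (σ : Equiv.Perm (Fin N)) (w : Fin N → Fin P → Fin d → ℤ) : ℝ :=
  c * ∑ ℓ : Fin N, ∑ j : Fin P, ∑ i : Fin d,
    (r ℓ j i + (w ℓ j i : ℝ) * L -
      (if h : j.val + 1 < P then r ℓ ⟨j.val + 1, h⟩ i else r (σ ℓ) 0 i)) ^ 2

namespace Function

variable {ι κ γ : Type*} [DecidableEq ι] [DecidableEq κ]

def update₂ (w : ι → κ → γ) (a : ι) (b : κ) (v : γ) : ι → κ → γ :=
  update w a (update (w a) b v)

@[simp]
theorem update₂_apply_self (w : ι → κ → γ) (a : ι) (b : κ) (v : γ) : update₂ w a b v a b = v := by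
  simp [update₂]

@[simp]
theorem update₂_update₂_self_apply (w : ι → κ → γ) (a : ι) (b : κ) (v : γ) :
    update₂ (update₂ w a b v) a b (w a b) = w := by
  simp [update₂]

theorem update₂_apply_of_ne (w : ι → κ → γ) {a i : ι} {b k : κ} (v : γ) (h : (i, k) ≠ (a, b)) :
    update₂ w a b v i k = w i k := by
  by_cases hi : i = a
  · subst hi
    simp_all [update₂]
  · simp [update₂, hi]

end Function

open Function

theorem Finset.sum_update_sub {ι γ M : Type*} [DecidableEq ι] [AddCommGroup M] {s : Finset ι}
    {a : ι} (ha : a ∈ s) (F : ι → γ → M) (w : ι → γ) (v : γ) :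
    ∑ i ∈ s, F i (update w a v i) - F a v = ∑ i ∈ s, F i (w i) - F a (w a) := by
  simp_rw [apply_update F w a v, sum_update_of_mem ha, sum_eq_add_sum_sdiff_singleton_of_mem ha]
  abel

theorem Fintype.sum_sum_update₂_sub {ι κ γ M : Type*} [DecidableEq ι] [DecidableEq κ]
    [Fintype ι] [Fintype κ] [AddCommGroup M] (F : ι → κ → γ → M) (w : ι → κ → γ)
    (a : ι) (b : κ) (v : γ) :
    ∑ i, ∑ k, F i k (update₂ w a b v i k) - F a b v = ∑ i, ∑ k, F i k (w i k) - F a b (w a b) := by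
  have outer := Finset.sum_update_sub (mem_univ a) (fun i u => ∑ k, F i k (u k)) w
    (update (w a) b v)
  have inner := Finset.sum_update_sub (mem_univ b) (F a) (w a) v
  simp only [update₂] at outer ⊢
  rw [← sub_add_sub_cancel _ (∑ k, F a k (update (w a) b v k)), outer, ← sub_add_cancel
    (∑ k, F a k (update (w a) b v k)) (F a b v), inner]
  abel

namespace Fintype

variable {ι κ γ : Type*} [DecidableEq ι] [DecidableEq κ] [Fintype ι] [Fintype κ]
  {s : ι → κ → Finset γ} {a : ι} {b : κ}

theorem update₂_mem_piFinset {w : ι → κ → γ} {v : γ}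
    (hw : w ∈ piFinset fun i => piFinset (s i)) (hv : v ∈ s a b) :
    update₂ w a b v ∈ piFinset fun i => piFinset (s i) := by
  simp only [mem_piFinset] at hw ⊢
  intro i k
  by_cases h : (i, k) = (a, b)
  · simp_all
  · rw [update₂_apply_of_ne w v h]
    exact hw i k

variable [DecidableEq γ] {M : Type*}

/-- Resetting the `(a, b)` entry to `v'` maps the fibre over `v` bijectively onto the fibre
over `v'`. -/
theorem sum_filter_apply₂_eq_of_update₂_invariant [AddCommMonoid M] (g : (ι → κ → γ) → M)
    (hg : ∀ w v, g (update₂ w a b v) = g w) {v v' : γ} (hv : v ∈ s a b) (hv' : v' ∈ s a b) :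
    ∑ w ∈ (piFinset fun i => piFinset (s i)).filter (fun w => w a b = v), g w =
      ∑ w ∈ (piFinset fun i => piFinset (s i)).filter (fun w => w a b = v'), g w := by
  refine Finset.sum_nbij' (fun w => update₂ w a b v') (fun w => update₂ w a b v) ?_ ?_ ?_ ?_
    fun w _ => (hg w v').symm
  all_goals
    intro w hw
    simp only [Finset.mem_filter] at hw ⊢
  · exact ⟨update₂_mem_piFinset hw.1 hv', update₂_apply_self ..⟩
  · exact ⟨update₂_mem_piFinset hw.1 hv, update₂_apply_self ..⟩
  · rw [← hw.2, update₂_update₂_self_apply]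
  · rw [← hw.2, update₂_update₂_self_apply]

theorem sum_filter_apply₂_mul [NonUnitalNonAssocSemiring M] (f : γ → M) (g : (ι → κ → γ) → M)
    (v : γ) :
    ∑ w ∈ (piFinset fun i => piFinset (s i)).filter (fun w => w a b = v), f (w a b) * g w =
      f v * ∑ w ∈ (piFinset fun i => piFinset (s i)).filter (fun w => w a b = v), g w := by
  rw [Finset.mul_sum]
  exact Finset.sum_congr rfl fun w hw => by rw [(Finset.mem_filter.mp hw).2]

theorem sum_apply₂_mul_of_update₂_invariant [NonUnitalNonAssocSemiring M] (f : γ → M)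
    (g : (ι → κ → γ) → M) (hg : ∀ w v, g (update₂ w a b v) = g w) {v₀ : γ} (hv₀ : v₀ ∈ s a b) :
    ∑ w ∈ piFinset fun i => piFinset (s i), f (w a b) * g w =
      (∑ v ∈ s a b, f v) *
        ∑ w ∈ (piFinset fun i => piFinset (s i)).filter (fun w => w a b = v₀), g w := by
  have hmaps (w) (hw : w ∈ piFinset fun i => piFinset (s i)) : w a b ∈ s a b := by
    simp only [mem_piFinset] at hw
    exact hw a b
  rw [← Finset.sum_fiberwise_of_maps_to hmaps, Finset.sum_mul]
  refine Finset.sum_congr rfl fun v hv => ?_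
  rw [sum_filter_apply₂_mul, sum_filter_apply₂_eq_of_update₂_invariant g hg hv hv₀]

end Fintype

def springSq {d : ℕ} (L : ℝ) (x y : Fin d → ℝ) (w : Fin d → ℤ) : ℝ :=
  ∑ i, (x i + (w i : ℝ) * L - y i) ^ 2

theorem mu_eq_exp_springSq (d : ℕ) (β c L : ℝ) (x y : Fin d → ℝ) (w : Fin d → ℤ) :
    mu d β c L x y w = Real.exp (-(β * (c * springSq L x y w))) := by
  rw [mu, springSq, mul_assoc]

theorem Eperm_update₂_sub_springSq {N P d : ℕ} [NeZero P] (c L : ℝ)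
    (r : Fin N → Fin P → Fin d → ℝ) (σ : Equiv.Perm (Fin N)) (w : Fin N → Fin P → Fin d → ℤ)
    {ℓ : Fin N} {j : Fin P} (hj : j.val + 1 < P) (v : Fin d → ℤ) :
    Eperm N P d c L r σ (update₂ w ℓ j v) - c * springSq L (r ℓ j) (r ℓ ⟨j.val + 1, hj⟩) v =
      Eperm N P d c L r σ w - c * springSq L (r ℓ j) (r ℓ ⟨j.val + 1, hj⟩) (w ℓ j) := by
  have h := Fintype.sum_sum_update₂_sub (fun ℓ j (u : Fin d → ℤ) => ∑ i, (r ℓ j i + (u i : ℝ) * L -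
      (if h : j.val + 1 < P then r ℓ ⟨j.val + 1, h⟩ i else r (σ ℓ) 0 i)) ^ 2) w ℓ j v
  simp only [dif_pos hj] at h
  rw [Eperm, Eperm, springSq, springSq]
  linear_combination c * h

theorem stmt9_general (N P d W : ℕ) [NeZero P]
    (β L c : ℝ)
    (r : Fin N → Fin P → Fin d → ℝ)
    (ℓ : Fin N) (j : Fin P) (hj : j.val + 1 < P)
    (w₀ : Fin d → ℤ) (hw₀ : w₀ ∈ windowSet d W) :
    ∑ σ : Equiv.Perm (Fin N),
        ∑ w ∈ (WAll N P d W).filter (fun w => w ℓ j = w₀),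
          Real.exp (-(β * Eperm N P d c L r σ w)) /
            (∑ σ' : Equiv.Perm (Fin N), ∑ w' ∈ WAll N P d W,
              Real.exp (-(β * Eperm N P d c L r σ' w')))
      = mu d β c L (r ℓ j) (r ℓ ⟨j.val + 1, hj⟩) w₀ /
          ∑ w' ∈ windowSet d W, mu d β c L (r ℓ j) (r ℓ ⟨j.val + 1, hj⟩) w' := by
  let rest (σ : Equiv.Perm (Fin N)) (w : Fin N → Fin P → Fin d → ℤ) : ℝ :=
    Real.exp (-(β * (Eperm N P d c L r σ w -
      c * springSq L (r ℓ j) (r ℓ ⟨j.val + 1, hj⟩) (w ℓ j))))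
  have hfactor (σ w) : Real.exp (-(β * Eperm N P d c L r σ w)) =
      mu d β c L (r ℓ j) (r ℓ ⟨j.val + 1, hj⟩) (w ℓ j) * rest σ w := by
    rw [mu_eq_exp_springSq, ← Real.exp_add]
    ring_nf
  have hrest (σ w v) : rest σ (update₂ w ℓ j v) = rest σ w := by
    simp only [rest, update₂_apply_self, Eperm_update₂_sub_springSq]
  have hrest_pos : 0 < ∑ σ : Equiv.Perm (Fin N),
      ∑ w ∈ (WAll N P d W).filter (fun w => w ℓ j = w₀), rest σ w := by
    refine Finset.sum_pos (fun σ _ => Finset.sum_pos (fun _ _ => Real.exp_pos _)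
      ⟨fun _ _ => w₀, ?_⟩) Finset.univ_nonempty
    simp [WAll, hw₀]
  unfold WAll at *
  simp_rw [← Finset.sum_div, hfactor, Fintype.sum_filter_apply₂_mul,
    Fintype.sum_apply₂_mul_of_update₂_invariant (s := fun _ _ => windowSet d W) _ _ (hrest _) hw₀,
    ← Finset.mul_sum]
  exact mul_div_mul_right _ _ hrest_pos.ne'

/-- interior-bead winding marginal in bosonic PIMD with PBC. For an
interior spring `(ℓ, j)` (with `j + 1 ≤ P - 1`... i.e. `j` not the last bead) and any
`w₀ ∈ Λ`, the marginal Boltzmann probability that the winding of that spring is `w₀`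
equals the single-spring Gaussian probability, independently of the permutations. -/
theorem stmt9 (N P d W : ℕ) [NeZero N] [NeZero P] (hd : 0 < d)
    (β L c : ℝ) (hβ : 0 < β) (hL : 0 < L) (hc : 0 < c)
    (r : Fin N → Fin P → Fin d → ℝ)
    (ℓ : Fin N) (j : Fin P) (hj : j.val + 1 < P)
    (w₀ : Fin d → ℤ) (hw₀ : w₀ ∈ windowSet d W) :
    ∑ σ : Equiv.Perm (Fin N),
        ∑ w ∈ (WAll N P d W).filter (fun w => w ℓ j = w₀),
          Real.exp (-(β * Eperm N P d c L r σ w)) /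
            (∑ σ' : Equiv.Perm (Fin N), ∑ w' ∈ WAll N P d W,
              Real.exp (-(β * Eperm N P d c L r σ' w')))
      = mu d β c L (r ℓ j) (r ℓ ⟨j.val + 1, hj⟩) w₀ /
          ∑ w' ∈ windowSet d W, mu d β c L (r ℓ j) (r ℓ ⟨j.val + 1, hj⟩) w' :=
  stmt9_general N P d W β L c r ℓ j hj w₀ hw₀

end
end

section
/- (Conditional winding probability given connectivity.) For every pair of particles ℓ, ℓ' ∈ Fin N and every w₀ ∈ Λ, ( ∑_{σ : σ(ℓ)=ℓ'} ∑_{w : w_ℓ^P = w₀} exp(−βE^{σ,w}) ) / ( ∑_{σ : σ(ℓ)=ℓ'} ∑_{w} exp(−βE^{σ,w}) ) = μ(r_ℓ^P, r_{ℓ'}^1, w₀) / ∑_{w'∈Λ} μ(r_ℓ^P, r_{ℓ'}^1, w'), where σ ranges over permutations of Fin N with σ(ℓ) = ℓ' and w over winding assignments Fin N → Fin P → Λ. In words: conditioned on the last bead of particle ℓ being connected to the first bead of particle ℓ', the winding of that spring has the single-spring Gaussian distribution. -/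
open Finset Real

noncomputable section

/-- The last bead (bead `P`, zero-indexed `P-1`). -/
def lastIdx (P : ℕ) [NeZero P] : Fin P :=
  ⟨P - 1, Nat.sub_lt (Nat.pos_of_ne_zero (NeZero.ne P)) Nat.one_pos⟩

lemma lastIdx_not_lt (P : ℕ) [NeZero P] : ¬ ((lastIdx P).val + 1 < P) := by
  have := Nat.pos_of_ne_zero (NeZero.ne P)
  simp only [lastIdx]
  omega

lemma Eperm_update {N P d : ℕ} [NeZero P] (c L : ℝ) (r : Fin N → Fin P → Fin d → ℝ)
    (σ : Equiv.Perm (Fin N)) (ℓ : Fin N)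
    (w : Fin N → Fin P → Fin d → ℤ) (v : Fin d → ℤ) :
    Eperm N P d c L r σ (Function.update w ℓ (Function.update (w ℓ) (lastIdx P) v))
      - c * ∑ i, (r ℓ (lastIdx P) i + (v i : ℝ) * L - r (σ ℓ) 0 i) ^ 2
    = Eperm N P d c L r σ w
      - c * ∑ i, (r ℓ (lastIdx P) i + (w ℓ (lastIdx P) i : ℝ) * L - r (σ ℓ) 0 i) ^ 2 := by
  set w' := Function.update w ℓ (Function.update (w ℓ) (lastIdx P) v) with hw'
  set f : (Fin N → Fin P → Fin d → ℤ) → Fin N → Fin P → ℝ := fun u a j =>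
    ∑ i, (r a j i + (u a j i : ℝ) * L -
      (if h : j.val + 1 < P then r a ⟨j.val + 1, h⟩ i else r (σ a) 0 i)) ^ 2 with hf
  have hE : ∀ u, Eperm N P d c L r σ u = c * ∑ a : Fin N, ∑ j, f u a j := fun u => rfl
  have hdiff : (∑ a : Fin N, ∑ j, f w' a j) - (∑ a : Fin N, ∑ j, f w a j)
      = f w' ℓ (lastIdx P) - f w ℓ (lastIdx P) := by
    rw [← Finset.sum_sub_distrib, Finset.sum_eq_single ℓ]
    · rw [← Finset.sum_sub_distrib, Finset.sum_eq_single (lastIdx P)]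
      · intro j _ hj
        have hwj : w' ℓ j = w ℓ j := by
          simp [hw', Function.update_self, Function.update_of_ne hj]
        simp [hf, hwj]
      · simp
    · intro b _ hb
      have hwb : w' b = w b := Function.update_of_ne hb _ _
      simp [hf, hwb]
    · simp
  have h1 : f w' ℓ (lastIdx P)
      = ∑ i, (r ℓ (lastIdx P) i + (v i : ℝ) * L - r (σ ℓ) 0 i) ^ 2 := by
    simp [hf, hw', lastIdx_not_lt P]
  have h2 : f w ℓ (lastIdx P)
      = ∑ i, (r ℓ (lastIdx P) i + (w ℓ (lastIdx P) i : ℝ) * L - r (σ ℓ) 0 i) ^ 2 := by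
    simp [hf, lastIdx_not_lt P]
  rw [h1, h2] at hdiff
  rw [hE w', hE w]
  linear_combination c * hdiff

/-- conditional winding probability given connectivity. Conditioned on the
last bead of particle `ℓ` being connected to the first bead of particle `ℓ'`, the winding
of that spring has the single-spring Gaussian distribution. -/
theorem stmt10 (N P d W : ℕ) [NeZero N] [NeZero P] (hd : 0 < d)
    (β L c : ℝ) (hβ : 0 < β) (hL : 0 < L) (hc : 0 < c)
    (r : Fin N → Fin P → Fin d → ℝ) (ℓ ℓ' : Fin N)
    (w₀ : Fin d → ℤ) (hw₀ : w₀ ∈ windowSet d W) :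
    (∑ σ ∈ Finset.univ.filter (fun σ : Equiv.Perm (Fin N) => σ ℓ = ℓ'),
        ∑ w ∈ (WAll N P d W).filter (fun w => w ℓ (lastIdx P) = w₀),
          Real.exp (-(β * Eperm N P d c L r σ w))) /
      (∑ σ ∈ Finset.univ.filter (fun σ : Equiv.Perm (Fin N) => σ ℓ = ℓ'),
        ∑ w ∈ WAll N P d W, Real.exp (-(β * Eperm N P d c L r σ w)))
      = mu d β c L (r ℓ (lastIdx P)) (r ℓ' 0) w₀ /
          ∑ w' ∈ windowSet d W, mu d β c L (r ℓ (lastIdx P)) (r ℓ' 0) w' := by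
  classical
  set last := lastIdx P with hlast
  set x := r ℓ last with hx
  set y := r ℓ' 0 with hy
  set G : Equiv.Perm (Fin N) → (Fin N → Fin P → Fin d → ℤ) → ℝ := fun σ w =>
    Real.exp (-(β * (Eperm N P d c L r σ w
      - c * ∑ i, (x i + (w ℓ last i : ℝ) * L - y i) ^ 2))) with hG
  -- factorization of the weight
  have hfact : ∀ (σ : Equiv.Perm (Fin N)), σ ℓ = ℓ' → ∀ w,
      Real.exp (-(β * Eperm N P d c L r σ w))
        = mu d β c L x y (w ℓ last) * G σ w := by
    intro σ hσ w
    rw [hG, mu, ← Real.exp_add]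
    congr 1
    ring
  -- membership of updates
  have hWmem : ∀ w ∈ WAll N P d W, ∀ v ∈ windowSet d W,
      Function.update w ℓ (Function.update (w ℓ) last v) ∈ WAll N P d W := by
    intro w hw v hv
    rw [WAll, Fintype.mem_piFinset] at hw ⊢
    intro a
    rcases eq_or_ne a ℓ with rfl | ha
    · rw [Function.update_self, Fintype.mem_piFinset]
      intro j
      rcases eq_or_ne j last with rfl | hj
      · rwa [Function.update_self]
      · rw [Function.update_of_ne hj]
        exact (Fintype.mem_piFinset.mp (hw _)) j
    · rw [Function.update_of_ne ha]
      exact hw a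
  -- G-invariance of fiber sums
  have hfiber : ∀ (σ : Equiv.Perm (Fin N)), σ ℓ = ℓ' → ∀ v ∈ windowSet d W,
      ∑ w ∈ (WAll N P d W).filter (fun w => w ℓ last = v), G σ w
      = ∑ w ∈ (WAll N P d W).filter (fun w => w ℓ last = w₀), G σ w := by
    intro σ hσ v hv
    refine Finset.sum_nbij' (fun w => Function.update w ℓ (Function.update (w ℓ) last w₀))
      (fun w => Function.update w ℓ (Function.update (w ℓ) last v)) ?_ ?_ ?_ ?_ ?_
    · intro w hw
      rw [Finset.mem_filter] at hw ⊢
      exact ⟨hWmem w hw.1 w₀ hw₀, by simp [Function.update_self]⟩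
    · intro w hw
      rw [Finset.mem_filter] at hw ⊢
      exact ⟨hWmem w hw.1 v hv, by simp [Function.update_self]⟩
    · intro w hw
      rw [Finset.mem_filter] at hw
      simp only [Function.update_self, Function.update_idem]
      rw [← hw.2, Function.update_eq_self, Function.update_eq_self]
    · intro w hw
      rw [Finset.mem_filter] at hw
      simp only [Function.update_self, Function.update_idem]
      rw [← hw.2, Function.update_eq_self, Function.update_eq_self]
    · intro w hw
      rw [hG]
      have key := Eperm_update c L r σ ℓ w w₀
      rw [hσ] at key
      simp only [Function.update_self]
      rw [← hx, ← hy] at key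
      rw [key]
  -- inner sums
  have hinnerF : ∀ (σ : Equiv.Perm (Fin N)), σ ℓ = ℓ' →
      ∑ w ∈ (WAll N P d W).filter (fun w => w ℓ last = w₀),
        Real.exp (-(β * Eperm N P d c L r σ w))
      = mu d β c L x y w₀ *
        ∑ w ∈ (WAll N P d W).filter (fun w => w ℓ last = w₀), G σ w := by
    intro σ hσ
    rw [Finset.mul_sum]
    refine Finset.sum_congr rfl fun w hw => ?_
    rw [Finset.mem_filter] at hw
    rw [hfact σ hσ w, hw.2]
  have hinnerT : ∀ (σ : Equiv.Perm (Fin N)), σ ℓ = ℓ' →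
      ∑ w ∈ WAll N P d W, Real.exp (-(β * Eperm N P d c L r σ w))
      = (∑ v ∈ windowSet d W, mu d β c L x y v) *
        ∑ w ∈ (WAll N P d W).filter (fun w => w ℓ last = w₀), G σ w := by
    intro σ hσ
    have hmaps : ∀ w ∈ WAll N P d W, w ℓ last ∈ windowSet d W := by
      intro w hw
      rw [WAll, Fintype.mem_piFinset] at hw
      exact (Fintype.mem_piFinset.mp (hw ℓ)) last
    rw [← Finset.sum_fiberwise_of_maps_to hmaps, Finset.sum_mul]
    refine Finset.sum_congr rfl fun v hv => ?_
    rw [show ∑ w ∈ (WAll N P d W).filter (fun w => w ℓ last = v),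
          Real.exp (-(β * Eperm N P d c L r σ w))
        = mu d β c L x y v *
          ∑ w ∈ (WAll N P d W).filter (fun w => w ℓ last = v), G σ w from ?_,
      hfiber σ hσ v hv]
    rw [Finset.mul_sum]
    refine Finset.sum_congr rfl fun w hw => ?_
    rw [Finset.mem_filter] at hw
    rw [hfact σ hσ w, hw.2]
  -- global sums
  set T : ℝ := ∑ σ ∈ Finset.univ.filter (fun σ : Equiv.Perm (Fin N) => σ ℓ = ℓ'),
    ∑ w ∈ (WAll N P d W).filter (fun w => w ℓ last = w₀), G σ w with hT
  have hNum : (∑ σ ∈ Finset.univ.filter (fun σ : Equiv.Perm (Fin N) => σ ℓ = ℓ'),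
      ∑ w ∈ (WAll N P d W).filter (fun w => w ℓ last = w₀),
        Real.exp (-(β * Eperm N P d c L r σ w))) = mu d β c L x y w₀ * T := by
    rw [hT, Finset.mul_sum]
    refine Finset.sum_congr rfl fun σ hσ => ?_
    rw [Finset.mem_filter] at hσ
    exact hinnerF σ hσ.2
  have hDen : (∑ σ ∈ Finset.univ.filter (fun σ : Equiv.Perm (Fin N) => σ ℓ = ℓ'),
      ∑ w ∈ WAll N P d W, Real.exp (-(β * Eperm N P d c L r σ w)))
      = (∑ v ∈ windowSet d W, mu d β c L x y v) * T := by
    rw [hT, Finset.mul_sum]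
    refine Finset.sum_congr rfl fun σ hσ => ?_
    rw [Finset.mem_filter] at hσ
    exact hinnerT σ hσ.2
  have hTpos : 0 < T := by
    rw [hT]
    refine Finset.sum_pos (fun σ hσ => Finset.sum_pos (fun w hw => Real.exp_pos _) ?_) ?_
    · refine ⟨fun _ _ => w₀, ?_⟩
      rw [Finset.mem_filter]
      constructor
      · rw [WAll, Fintype.mem_piFinset]
        intro a
        rw [Fintype.mem_piFinset]
        intro j
        exact hw₀
      · rfl
    · exact ⟨Equiv.swap ℓ ℓ', by simp [Equiv.swap_apply_left]⟩
  rw [hNum, hDen, mul_div_mul_right _ _ (ne_of_gt hTpos)]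


end
end
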